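/- arXiv:2311.13686 — 4 statements merged into one kernel-verified Lean document; each statement's English description precedes it below -/
import Mathlib

section
/- The number of {±1}-valued vectors of length n contained in a real linear subspace of ℝ^n of dimension ℓ is at most 2^ℓ. -/
/-- The number of `{±1}`-valued vectors of length `n` contained in a real linear subspace
of `ℝ^n` of dimension `ℓ` is at most `2^ℓ`. -/
theorem pm_one_vectors_in_subspace_card_le
    (n ℓ : ℕ) (S : Submodule ℝ (Fin n → ℝ)) (hS : Module.finrank ℝ S = ℓ) :
    Set.ncard {v : Fin n → ℝ | v ∈ S ∧ ∀ i, v i = 1 ∨ v i = -1} ≤ 2 ^ ℓ := by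
  classical
  haveI : FiniteDimensional ℝ S := inferInstance
  set f : Fin n → Module.Dual ℝ S := fun i => (LinearMap.proj i).comp S.subtype with hf
  -- the coordinate functionals restricted to `S` span the dual of `S`
  have hspan : Submodule.span ℝ (Set.range f) = ⊤ := by
    have hsurj : Function.Surjective (S.subtype.dualMap) :=
      LinearMap.dualMap_surjective_of_injective S.injective_subtype
    rw [eq_top_iff]
    rintro φ -
    obtain ⟨ψ, rfl⟩ := hsurj φ
    have hψ : ψ = ∑ i, ψ (Pi.single i 1) • (LinearMap.proj i : (Fin n → ℝ) →ₗ[ℝ] ℝ) := by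
      apply (Pi.basisFun ℝ (Fin n)).ext
      intro i
      simp [Pi.basisFun_apply, Pi.single_apply]
    rw [hψ, map_sum]
    refine Submodule.sum_mem _ fun i _ => ?_
    rw [LinearMap.map_smul]
    refine Submodule.smul_mem _ _ (Submodule.subset_span ⟨i, ?_⟩)
    rfl
  obtain ⟨t, hts, htspan, htli⟩ := exists_linearIndependent ℝ (Set.range f)
  rw [hspan] at htspan
  have htfin : t.Finite := htli.setFinite
  haveI : Fintype t := htfin.fintype
  have b : Module.Basis t ℝ (Module.Dual ℝ S) :=
    Module.Basis.mk htli (by rw [Subtype.range_coe, htspan])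
  have hcard : Fintype.card t = ℓ := by
    rw [← Module.finrank_eq_card_basis b, Subspace.dual_finrank_eq, hS]
  set A : Set (Fin n → ℝ) := {v : Fin n → ℝ | v ∈ S ∧ ∀ i, v i = 1 ∨ v i = -1} with hA
  -- injection into `t → Bool`
  set G : A → (t → Bool) := fun v φ => decide ((φ : Module.Dual ℝ S) ⟨v.1, v.2.1⟩ = 1) with hG
  have hGinj : Function.Injective G := by
    intro v w h
    have hvw : (⟨v.1, v.2.1⟩ : S) = ⟨w.1, w.2.1⟩ := by
      rw [← sub_eq_zero, ← Module.forall_dual_apply_eq_zero_iff ℝ]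
      intro φ
      have hφ : φ ∈ (⊤ : Submodule ℝ (Module.Dual ℝ S)) := trivial
      rw [← htspan] at hφ
      induction hφ using Submodule.span_induction with
      | mem φ hφ =>
          obtain ⟨i, rfl⟩ := hts hφ
          have h1 := congrFun h ⟨f i, hφ⟩
          simp only [hG, decide_eq_decide] at h1
          have hv := v.2.2 i
          have hw := w.2.2 i
          have hfv : f i ⟨v.1, v.2.1⟩ = v.1 i := rfl
          have hfw : f i ⟨w.1, w.2.1⟩ = w.1 i := rfl
          rw [map_sub, sub_eq_zero, hfv, hfw]
          rw [hfv, hfw] at h1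
          rcases hv with hv | hv <;> rcases hw with hw | hw <;>
            simp [hv, hw] at h1 ⊢ <;> norm_num at h1
      | zero => simp
      | add φ ψ _ _ hφ hψ => rw [LinearMap.add_apply, hφ, hψ, add_zero]
      | smul c φ _ hφ => rw [LinearMap.smul_apply, hφ, smul_zero]
    ext i
    exact congrFun (congrArg Subtype.val hvw) i
  calc A.ncard = Nat.card A := (Nat.card_coe_set_eq A).symm
    _ ≤ Nat.card (t → Bool) := Nat.card_le_card_of_injective G hGinj
    _ = 2 ^ ℓ := by
        rw [Nat.card_fun, Nat.card_eq_fintype_card, Nat.card_eq_fintype_card,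
          Fintype.card_bool, hcard]
end

section
/- Let m be a positive integer and q = 2^k with 0 ≤ k ≤ m-1. Then {±1}^m (viewed as a subset of ℝ^m) can be partitioned into q pairwise disjoint subsets F_1, ..., F_q, each of size 2^m / q, such that for every i, the real linear span of F_i has dimension exactly m - log₂ q. -/
open Finset
set_option maxHeartbeats 1000000

/-- Sign bit `l` of the index `i < 2^k`, as `±1 ∈ ℝ`. -/
noncomputable def pmSgn (k : ℕ) (i : Fin (2 ^ k)) (l : ℕ) : ℝ :=
  if h : l < k then (if finFunctionFinEquiv.symm i ⟨l, h⟩ = 0 then 1 else -1) else 1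

/-- Partial products of the sign bits. -/
noncomputable def pmC (k : ℕ) (i : Fin (2 ^ k)) (j : ℕ) : ℝ :=
  ∏ l ∈ Finset.range j, pmSgn k i l

lemma pmSgn_pm (k : ℕ) (i : Fin (2 ^ k)) (l : ℕ) : pmSgn k i l = 1 ∨ pmSgn k i l = -1 := by
  unfold pmSgn; split_ifs <;> simp

lemma pmC_zero (k : ℕ) (i : Fin (2 ^ k)) : pmC k i 0 = 1 := by simp [pmC]

lemma pmC_succ (k : ℕ) (i : Fin (2 ^ k)) (j : ℕ) :
    pmC k i (j + 1) = pmC k i j * pmSgn k i j := Finset.prod_range_succ _ _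

lemma pmC_pm (k : ℕ) (i : Fin (2 ^ k)) (j : ℕ) : pmC k i j = 1 ∨ pmC k i j = -1 := by
  induction j with
  | zero => left; exact pmC_zero k i
  | succ n ih =>
    rw [pmC_succ]
    rcases ih with h | h <;> rcases pmSgn_pm k i n with h' | h' <;> rw [h, h'] <;> norm_num

lemma pmC_sq (k : ℕ) (i : Fin (2 ^ k)) (j : ℕ) : pmC k i j * pmC k i j = 1 := by
  rcases pmC_pm k i j with h | h <;> rw [h] <;> norm_num

lemma pmC_mul_succ (k : ℕ) (i : Fin (2 ^ k)) (l : ℕ) :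
    pmC k i l * pmC k i (l + 1) = pmSgn k i l := by
  rw [pmC_succ, ← mul_assoc, pmC_sq, one_mul]

/-- The embedding of the small cube `{±1}^(m-k)` as the `i`-th piece of the partition. -/
noncomputable def pmE (m k : ℕ) (i : Fin (2 ^ k)) (w : Fin (m - k) → ℝ) : Fin m → ℝ :=
  fun j =>
    if (j : ℕ) ≤ k then (if h : 0 < m - k then w ⟨0, h⟩ else 0) * pmC k i (j : ℕ)
    else if h : (j : ℕ) - k < m - k then w ⟨(j : ℕ) - k, h⟩ else 0

/-- A basis for the span of the `i`-th piece. -/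
noncomputable def pmB (m k : ℕ) (i : Fin (2 ^ k)) (t : Fin (m - k)) : Fin m → ℝ :=
  fun j =>
    if (t : ℕ) = 0 then (if (j : ℕ) ≤ k then pmC k i (j : ℕ) else 0)
    else if (j : ℕ) = k + (t : ℕ) then 1 else 0

lemma pmB_sum (m k : ℕ) (hm : 1 ≤ m) (hk : k ≤ m - 1) (i : Fin (2 ^ k))
    (a : Fin (m - k) → ℝ) : ∑ t, a t • pmB m k i t = pmE m k i a := by
  have hmk : 0 < m - k := by omega
  funext j
  rw [Finset.sum_apply]
  by_cases hj : (j : ℕ) ≤ k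
  · rw [Fintype.sum_eq_single (⟨0, hmk⟩ : Fin (m - k))]
    · simp [pmB, pmE, hj, hmk]
    · intro t ht
      have ht' : (t : ℕ) ≠ 0 := fun h => ht (Fin.ext h)
      have hne : (j : ℕ) ≠ k + (t : ℕ) := by omega
      simp [pmB, ht', hne]
  · have hj' : k < (j : ℕ) := by omega
    have hjk : (j : ℕ) - k < m - k := by omega
    have h0 : (j : ℕ) - k ≠ 0 := by omega
    rw [Fintype.sum_eq_single (⟨(j : ℕ) - k, hjk⟩ : Fin (m - k))]
    · have hkj : (j : ℕ) = k + ((j : ℕ) - k) := by omega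
      simp [pmB, pmE, hj, h0, hjk, ← hkj]
    · intro t ht
      by_cases ht0 : (t : ℕ) = 0
      · simp [pmB, ht0, hj]
      · have hne : (j : ℕ) ≠ k + (t : ℕ) := by
          intro h
          exact ht (Fin.ext (show (t : ℕ) = (j : ℕ) - k by omega))
        simp [pmB, ht0, hne]

/-- `{±1}^m ⊆ ℝ^m` can be partitioned into `q = 2^k` (with `k ≤ m - 1`, `m ≥ 1`) pairwise
disjoint subsets, each of size `2^m / q = 2^(m-k)`, such that the real linear span of each
subset has dimension exactly `m - k = m - log₂ q`. -/
theorem pm_one_cube_partition_low_dim_spans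
    (m k : ℕ) (hm : 1 ≤ m) (hk : k ≤ m - 1) :
    ∃ F : Fin (2 ^ k) → Set (Fin m → ℝ),
      (∀ i j, i ≠ j → Disjoint (F i) (F j)) ∧
      (⋃ i, F i) = {v : Fin m → ℝ | ∀ s, v s = 1 ∨ v s = -1} ∧
      (∀ i, (F i).ncard = 2 ^ (m - k)) ∧
      (∀ i, Module.finrank ℝ (Submodule.span ℝ (F i)) = m - k) := by
  classical
  have hmk : 0 < m - k := by omega
  have hkm : k < m := by omega
  set S : Set (Fin (m - k) → ℝ) := {w | ∀ s, w s = 1 ∨ w s = -1} with hS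
  -- values of pmE on the small cube are ±1
  have hEpm : ∀ (i : Fin (2 ^ k)) (w : Fin (m - k) → ℝ), w ∈ S → ∀ j : Fin m,
      pmE m k i w j = 1 ∨ pmE m k i w j = -1 := by
    intro i w hw j
    unfold pmE
    by_cases hj : (j : ℕ) ≤ k
    · rw [if_pos hj, dif_pos hmk]
      rcases hw ⟨0, hmk⟩ with h | h <;> rcases pmC_pm k i (j : ℕ) with h' | h' <;>
        rw [h, h'] <;> norm_num
    · have hjk : (j : ℕ) - k < m - k := by omega
      rw [if_neg hj, dif_pos hjk]
      exact hw _
  -- value of pmE at a coordinate `l ≤ k`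
  have hElow : ∀ (i : Fin (2 ^ k)) (w : Fin (m - k) → ℝ) (l : ℕ) (hl : l ≤ k),
      pmE m k i w ⟨l, by omega⟩ = w ⟨0, hmk⟩ * pmC k i l := by
    intro i w l hl
    unfold pmE
    rw [if_pos hl, dif_pos hmk]
  -- value at a coordinate `> k`
  have hEhigh : ∀ (i : Fin (2 ^ k)) (w : Fin (m - k) → ℝ) (l : ℕ) (hl : k < l) (hl' : l < m),
      pmE m k i w ⟨l, hl'⟩ = w ⟨l - k, by omega⟩ := by
    intro i w l hl hl'
    unfold pmE
    rw [if_neg (show ¬ ((l : ℕ) ≤ k) by omega), dif_pos (show l - k < m - k by omega)]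
  -- consecutive products recover signs
  have hsgn : ∀ (i : Fin (2 ^ k)) (w : Fin (m - k) → ℝ), w ∈ S → ∀ l : ℕ, (hl : l < k) →
      pmE m k i w ⟨l, by omega⟩ * pmE m k i w ⟨l + 1, by omega⟩ = pmSgn k i l := by
    intro i w hw l hl
    rw [hElow i w l (by omega), hElow i w (l + 1) (by omega)]
    have hw0 : w ⟨0, hmk⟩ * w ⟨0, hmk⟩ = 1 := by
      rcases hw ⟨0, hmk⟩ with h | h <;> rw [h] <;> norm_num
    calc w ⟨0, hmk⟩ * pmC k i l * (w ⟨0, hmk⟩ * pmC k i (l + 1))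
        = (w ⟨0, hmk⟩ * w ⟨0, hmk⟩) * (pmC k i l * pmC k i (l + 1)) := by ring
      _ = pmSgn k i l := by rw [hw0, one_mul, pmC_mul_succ]
  refine ⟨fun i => pmE m k i '' S, ?_, ?_, ?_, ?_⟩
  · -- disjointness
    intro i i' hne
    rw [Set.disjoint_left]
    rintro v ⟨w, hw, rfl⟩ ⟨w', hw', hvv⟩
    apply hne
    apply finFunctionFinEquiv.symm.injective
    funext l
    have h1 : pmSgn k i (l : ℕ) = pmSgn k i' (l : ℕ) := by
      rw [← hsgn i w hw l l.isLt, ← hsgn i' w' hw' l l.isLt, hvv]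
    unfold pmSgn at h1
    rw [dif_pos l.isLt, dif_pos l.isLt] at h1
    have hcast : (⟨(l : ℕ), l.isLt⟩ : Fin k) = l := rfl
    rw [hcast] at h1
    split_ifs at h1 with ha hb hb
    · omega
    · norm_num at h1
    · norm_num at h1
    · have h2 := (finFunctionFinEquiv.symm i l).isLt
      have h3 := (finFunctionFinEquiv.symm i' l).isLt
      apply Fin.ext
      have ha' : ((finFunctionFinEquiv.symm i l : Fin 2) : ℕ) ≠ 0 := fun h => ha (Fin.ext h)
      have hb' : ((finFunctionFinEquiv.symm i' l : Fin 2) : ℕ) ≠ 0 := fun h => hb (Fin.ext h)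
      omega
  · -- union is the cube
    apply Set.eq_of_subset_of_subset
    · rintro v ⟨_, ⟨i, rfl⟩, w, hw, rfl⟩
      exact fun s => hEpm i w hw s
    · intro v hv
      have hv' : ∀ s : Fin m, v s = 1 ∨ v s = -1 := hv
      have hvsq : ∀ s : Fin m, v s * v s = 1 := by
        intro s; rcases hv' s with h | h <;> rw [h] <;> norm_num
      set b : Fin k → Fin 2 :=
        fun l => if v ⟨l, by omega⟩ * v ⟨(l : ℕ) + 1, by omega⟩ = 1 then 0 else 1 with hb
      set i : Fin (2 ^ k) := finFunctionFinEquiv b with hi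
      have hbi : finFunctionFinEquiv.symm i = b := Equiv.symm_apply_apply _ _
      have hsgnv : ∀ l : ℕ, (hl : l < k) →
          pmSgn k i l = v ⟨l, by omega⟩ * v ⟨l + 1, by omega⟩ := by
        intro l hl
        unfold pmSgn
        rw [dif_pos hl, hbi]
        have hbeq : b ⟨l, hl⟩ =
            if v ⟨l, by omega⟩ * v ⟨l + 1, by omega⟩ = 1 then 0 else 1 := rfl
        show (if b ⟨l, hl⟩ = 0 then (1 : ℝ) else -1) = _
        rw [hbeq]
        by_cases hvl : v ⟨l, by omega⟩ * v ⟨l + 1, by omega⟩ = 1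
        · rw [if_pos hvl, if_pos rfl, hvl]
        · have hm1 : v ⟨l, by omega⟩ * v ⟨l + 1, by omega⟩ = -1 := by
            rcases hv' ⟨l, by omega⟩ with h | h <;> rcases hv' ⟨l + 1, by omega⟩ with h' | h' <;>
              rw [h, h'] at hvl ⊢ <;> norm_num at hvl <;> norm_num
          rw [if_neg hvl, if_neg (by norm_num), hm1]
      -- the telescope identity
      have hC : ∀ l : ℕ, (hl : l ≤ k) → pmC k i l = v ⟨0, by omega⟩ * v ⟨l, by omega⟩ := by
        intro l
        induction l with
        | zero => intro _; rw [pmC_zero, hvsq]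
        | succ n ih =>
          intro hn
          rw [pmC_succ, ih (by omega), hsgnv n (by omega)]
          have hre : v ⟨0, by omega⟩ * v ⟨n, by omega⟩ * (v ⟨n, by omega⟩ * v ⟨n + 1, by omega⟩)
              = v ⟨0, by omega⟩ * (v ⟨n, by omega⟩ * v ⟨n, by omega⟩) * v ⟨n + 1, by omega⟩ := by
            ring
          rw [hre, hvsq, mul_one]
      set w : Fin (m - k) → ℝ :=
        fun t => if (t : ℕ) = 0 then v ⟨0, by omega⟩ else v ⟨k + t, by omega⟩ with hwdef
      have hw0 : w ⟨0, hmk⟩ = v ⟨0, by omega⟩ := rfl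
      refine Set.mem_iUnion.2 ⟨i, w, ?_, ?_⟩
      · intro s
        by_cases h : (s : ℕ) = 0
        · have hws : w s = v ⟨0, by omega⟩ := if_pos h
          rw [hws]; exact hv' _
        · have hws : w s = v ⟨k + s, by omega⟩ := if_neg h
          rw [hws]; exact hv' _
      · funext j
        by_cases hj : (j : ℕ) ≤ k
        · have he := hElow i w (j : ℕ) hj
          have hj2 : (⟨(j : ℕ), by omega⟩ : Fin m) = j := rfl
          rw [hj2] at he
          rw [he, hw0, hC (j : ℕ) hj, ← mul_assoc, hvsq, one_mul]
        · have hj' : k < (j : ℕ) := by omega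
          have he := hEhigh i w (j : ℕ) hj' j.isLt
          have hj2 : (⟨(j : ℕ), j.isLt⟩ : Fin m) = j := rfl
          rw [hj2] at he
          rw [he]
          have h0 : ((⟨(j : ℕ) - k, by omega⟩ : Fin (m - k)) : ℕ) ≠ 0 :=
            show (j : ℕ) - k ≠ 0 by omega
          have hws : w ⟨(j : ℕ) - k, by omega⟩ = v ⟨k + ((j : ℕ) - k), by omega⟩ := if_neg h0
          rw [hws]
          exact congrArg v (Fin.ext (show k + ((j : ℕ) - k) = (j : ℕ) by omega))
  · -- cardinality
    intro i
    have hinj : Set.InjOn (pmE m k i) S := by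
      intro w hw w' hw' hww
      funext t
      by_cases ht : (t : ℕ) = 0
      · have h1 := congrFun hww ⟨0, by omega⟩
        rw [hElow i w 0 (by omega), hElow i w' 0 (by omega), pmC_zero, mul_one, mul_one] at h1
        have : t = ⟨0, hmk⟩ := Fin.ext ht
        rw [this]; exact h1
      · have hkt : k + (t : ℕ) < m := by omega
        have h1 := congrFun hww ⟨k + (t : ℕ), hkt⟩
        rw [hEhigh i w (k + (t : ℕ)) (by omega) hkt,
          hEhigh i w' (k + (t : ℕ)) (by omega) hkt] at h1
        have : (⟨k + (t : ℕ) - k, by omega⟩ : Fin (m - k)) = t := Fin.ext (by simp)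
        rw [this] at h1
        exact h1
    rw [Set.ncard_image_of_injOn hinj]
    -- S is the range of the ±1 indicator
    have hSr : S = Set.range (fun b : Fin (m - k) → Bool => fun s => if b s then (1 : ℝ) else -1) := by
      apply Set.eq_of_subset_of_subset
      · intro w hw
        refine ⟨fun s => if w s = 1 then true else false, ?_⟩
        funext s
        show (if (if w s = 1 then true else false) = true then (1 : ℝ) else -1) = w s
        rcases hw s with h | h <;> rw [h] <;> norm_num
      · rintro w ⟨b, rfl⟩ s
        by_cases h : b s <;> simp [h]
    rw [hSr, ← Nat.card_coe_set_eq, Nat.card_range_of_injective]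
    · simp
    · intro b b' hbb
      funext s
      have := congrFun hbb s
      by_cases h : b s <;> by_cases h' : b' s <;> simp [h, h'] at this ⊢ <;> norm_num at this
  · -- dimension of the span
    intro i
    have hspan : Submodule.span ℝ (pmE m k i '' S) = Submodule.span ℝ (Set.range (pmB m k i)) := by
      apply le_antisymm
      · rw [Submodule.span_le]
        rintro v ⟨w, hw, rfl⟩
        rw [← pmB_sum m k hm hk i w]
        exact Submodule.sum_mem _ fun t _ =>
          Submodule.smul_mem _ _ (Submodule.subset_span ⟨t, rfl⟩)
      · rw [Submodule.span_le]
        rintro v ⟨t, rfl⟩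
        have hw1 : (fun _ : Fin (m - k) => (1 : ℝ)) ∈ S := fun s => Or.inl rfl
        by_cases ht : (t : ℕ) = 0
        · -- B t = (E w₁ + E w₂)/2 with w₂ = sign pattern flipping the tail
          set w2 : Fin (m - k) → ℝ := fun s => if (s : ℕ) = 0 then 1 else -1 with hw2def
          have hw2 : w2 ∈ S := by
            intro s; by_cases h : (s : ℕ) = 0 <;> simp [hw2def, h]
          have hkey : pmB m k i t =
              (2⁻¹ : ℝ) • (pmE m k i (fun _ => 1) + pmE m k i w2) := by
            funext j
            simp only [Pi.smul_apply, Pi.add_apply, smul_eq_mul]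
            by_cases hj : (j : ℕ) ≤ k
            · have e1 := hElow i (fun _ => 1) (j : ℕ) hj
              have e2 := hElow i w2 (j : ℕ) hj
              have hj2 : (⟨(j : ℕ), by omega⟩ : Fin m) = j := rfl
              rw [hj2] at e1 e2
              rw [e1, e2]
              have hv2 : w2 ⟨0, hmk⟩ = 1 := rfl
              rw [hv2, one_mul]
              unfold pmB
              rw [if_pos ht, if_pos hj]
              ring
            · have hj' : k < (j : ℕ) := by omega
              have e1 := hEhigh i (fun _ => 1) (j : ℕ) hj' j.isLt
              have e2 := hEhigh i w2 (j : ℕ) hj' j.isLt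
              have hj2 : (⟨(j : ℕ), j.isLt⟩ : Fin m) = j := rfl
              rw [hj2] at e1 e2
              rw [e1, e2]
              have hv2 : w2 ⟨(j : ℕ) - k, by omega⟩ = -1 :=
                if_neg (show ¬ ((j : ℕ) - k = 0) by omega)
              rw [hv2]
              unfold pmB
              rw [if_pos ht, if_neg hj]
              ring
          rw [hkey]
          exact Submodule.smul_mem _ _ (Submodule.add_mem _
            (Submodule.subset_span ⟨_, hw1, rfl⟩) (Submodule.subset_span ⟨_, hw2, rfl⟩))
        · set w3 : Fin (m - k) → ℝ := fun s => if s = t then -1 else 1 with hw3def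
          have hw3 : w3 ∈ S := by
            intro s; by_cases h : s = t <;> simp [hw3def, h]
          have hkey : pmB m k i t =
              (2⁻¹ : ℝ) • (pmE m k i (fun _ => 1) - pmE m k i w3) := by
            funext j
            simp only [Pi.smul_apply, Pi.sub_apply, smul_eq_mul]
            by_cases hj : (j : ℕ) ≤ k
            · have e1 := hElow i (fun _ => 1) (j : ℕ) hj
              have e2 := hElow i w3 (j : ℕ) hj
              have hj2 : (⟨(j : ℕ), by omega⟩ : Fin m) = j := rfl
              rw [hj2] at e1 e2
              rw [e1, e2]
              have hv3 : w3 ⟨0, hmk⟩ = 1 :=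
                if_neg (fun h => ht (by rw [← h]))
              rw [hv3, one_mul]
              unfold pmB
              rw [if_neg ht, if_neg (by omega)]
              ring
            · have hj' : k < (j : ℕ) := by omega
              have e1 := hEhigh i (fun _ => 1) (j : ℕ) hj' j.isLt
              have e2 := hEhigh i w3 (j : ℕ) hj' j.isLt
              have hj2 : (⟨(j : ℕ), j.isLt⟩ : Fin m) = j := rfl
              rw [hj2] at e1 e2
              rw [e1, e2]
              unfold pmB
              rw [if_neg ht]
              by_cases hjt : (j : ℕ) = k + (t : ℕ)
              · rw [if_pos hjt]
                have hv3 : w3 ⟨(j : ℕ) - k, by omega⟩ = -1 :=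
                  if_pos (Fin.ext (show (j : ℕ) - k = (t : ℕ) by omega))
                rw [hv3]; ring
              · rw [if_neg hjt]
                have hv3 : w3 ⟨(j : ℕ) - k, by omega⟩ = 1 :=
                  if_neg (fun h => hjt (by
                    have h2 : (j : ℕ) - k = (t : ℕ) := congrArg Fin.val h
                    omega))
                rw [hv3]; ring
          rw [hkey]
          exact Submodule.smul_mem _ _ (Submodule.sub_mem _
            (Submodule.subset_span ⟨_, hw1, rfl⟩) (Submodule.subset_span ⟨_, hw3, rfl⟩))
    have hlin : LinearIndependent ℝ (pmB m k i) := by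
      rw [Fintype.linearIndependent_iff]
      intro g hg t
      rw [pmB_sum m k hm hk i g] at hg
      by_cases ht : (t : ℕ) = 0
      · have h1 := congrFun hg ⟨0, by omega⟩
        rw [hElow i g 0 (by omega), pmC_zero, mul_one] at h1
        have : t = ⟨0, hmk⟩ := Fin.ext ht
        rw [this]
        simpa using h1
      · have hkt : k + (t : ℕ) < m := by omega
        have h1 := congrFun hg ⟨k + (t : ℕ), hkt⟩
        rw [hEhigh i g (k + (t : ℕ)) (by omega) hkt] at h1
        have h2 : (⟨k + (t : ℕ) - k, by omega⟩ : Fin (m - k)) = t := Fin.ext (by simp)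
        rw [h2] at h1
        simpa using h1
    rw [hspan, finrank_span_eq_card hlin, Fintype.card_fin]
end

section
/- If A ⊂ ℝ is a finite set of size 2^m with coefficient complexity C(A) = m and the sum of the elements of A equals 0, then there exist real numbers λ_1, ..., λ_m such that A equals the Minkowski sum Σ_{i=1}^{m} λ_i·{1, −1} exactly (with no constant shift, and with equality rather than inclusion). -/
/-- `A` admits a representation `A ⊆ λ₀ + Σ_{i=1}^{θ} λ_i·{1,−1}` (Minkowski sum). -/
def CanRepresent (A : Finset ℝ) (θ : ℕ) : Prop :=
  ∃ (lam0 : ℝ) (lam : Fin θ → ℝ), ∀ a ∈ A, ∃ eps : Fin θ → ℝ,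
    (∀ i, eps i = 1 ∨ eps i = -1) ∧ a = lam0 + ∑ i, lam i * eps i

/-- The coefficient complexity `C(A)`: the smallest positive integer `θ` such that
`A ⊆ λ₀ + Σ_{i=1}^{θ} λ_i·{1,−1}` for some reals `λ₀, λ₁, ..., λ_θ`. -/
noncomputable def coeffComplexity (A : Finset ℝ) : ℕ :=
  sInf {θ : ℕ | 1 ≤ θ ∧ CanRepresent A θ}

lemma sum_sign_zero (m : ℕ) (i : Fin m) :
    ∑ b : Fin m → Bool, (if b i then (1:ℝ) else -1) = 0 := by
  classical
  apply Finset.sum_ninvolution (fun b => Function.update b i (!b i))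
  · intro b
    simp only [Function.update_self]
    cases h : b i <;> simp
  · intro b hb h
    apply hb
    have : (Function.update b i (!b i)) i = b i := by rw [h]
    simp at this
  · intro b; exact Finset.mem_univ _
  · intro b
    funext j
    by_cases hj : j = i
    · subst hj; simp
    · simp [Function.update_of_ne hj]

/-- A perfect set `A` (of size `2^m`, with `C(A) = m` and `sum(A) = 0`) can be written
exactly as the Minkowski sum `Σ_{i=1}^{m} λ_i·{1,−1}`, with no constant shift. -/
theorem perfect_set_exact_representation (m : ℕ) (hm : 1 ≤ m) (A : Finset ℝ)
    (hcard : A.card = 2 ^ m) (hC : coeffComplexity A = m)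
    (hsum : ∑ a ∈ A, a = 0) :
    ∃ lam : Fin m → ℝ,
      (A : Set ℝ) = {x : ℝ | ∃ eps : Fin m → ℝ,
        (∀ i, eps i = 1 ∨ eps i = -1) ∧ x = ∑ i, lam i * eps i} := by
  classical
  -- m is in the set
  have hne : {θ : ℕ | 1 ≤ θ ∧ CanRepresent A θ}.Nonempty := by
    by_contra h
    rw [Set.not_nonempty_iff_eq_empty] at h
    rw [coeffComplexity, h, Nat.sInf_empty] at hC
    omega
  have hmem : m ∈ {θ : ℕ | 1 ≤ θ ∧ CanRepresent A θ} := by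
    rw [← hC, coeffComplexity]
    exact Nat.sInf_mem hne
  obtain ⟨-, lam0, lam, hrep⟩ := hmem
  set f : (Fin m → Bool) → ℝ :=
    fun b => lam0 + ∑ i, lam i * (if b i then (1:ℝ) else -1) with hf
  set S : Finset ℝ := Finset.image f Finset.univ with hS
  have hsub : A ⊆ S := by
    intro a ha
    obtain ⟨eps, heps, haeq⟩ := hrep a ha
    refine Finset.mem_image.2 ⟨fun i => if eps i = 1 then true else false,
      Finset.mem_univ _, ?_⟩
    rw [hf]
    simp only
    rw [haeq]
    congr 1
    apply Finset.sum_congr rfl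
    intro i _
    rcases heps i with h | h <;> simp [h] <;> norm_num
  have hcardfun : Fintype.card (Fin m → Bool) = 2 ^ m := by
    simp [Fintype.card_fun]
  have hScard : S.card ≤ 2 ^ m := by
    calc S.card ≤ (Finset.univ : Finset (Fin m → Bool)).card := Finset.card_image_le
    _ = 2 ^ m := by rw [Finset.card_univ, hcardfun]
  have hAS : A = S := Finset.eq_of_subset_of_card_le hsub (by rw [hcard]; exact hScard)
  have hinj : ∀ x ∈ (Finset.univ : Finset (Fin m → Bool)), ∀ y ∈ Finset.univ,
      f x = f y → x = y := by
    have hcardeq : (Finset.univ : Finset (Fin m → Bool)).card =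
        (Finset.image f Finset.univ).card := by
      rw [← hS, ← hAS, hcard, Finset.card_univ, hcardfun]
    have := Finset.injOn_of_card_image_eq hcardeq.symm
    intro x hx y hy hxy
    exact this (Finset.mem_coe.2 hx) (Finset.mem_coe.2 hy) hxy
  have hsum2 : ∑ b : Fin m → Bool, f b = 0 := by
    calc ∑ b : Fin m → Bool, f b = ∑ x ∈ S, x := by
          rw [hS]; exact (Finset.sum_image (f := fun x : ℝ => x) (g := f) hinj).symm
    _ = ∑ a ∈ A, a := by rw [hAS]
    _ = 0 := hsum
  have hlam0 : lam0 = 0 := by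
    have h1 : ∑ b : Fin m → Bool, f b
        = (2 ^ m : ℝ) * lam0 + ∑ b : Fin m → Bool, ∑ i, lam i * (if b i then (1:ℝ) else -1) := by
      rw [hf, Finset.sum_add_distrib, Finset.sum_const, Finset.card_univ, hcardfun]
      push_cast
      ring_nf
    have h2 : ∑ b : Fin m → Bool, ∑ i, lam i * (if b i then (1:ℝ) else -1) = 0 := by
      rw [Finset.sum_comm]
      apply Finset.sum_eq_zero
      intro i _
      rw [← Finset.mul_sum, sum_sign_zero]
      ring
    rw [hsum2, h2, add_zero] at h1
    have : (2:ℝ) ^ m ≠ 0 := by positivity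
    field_simp at h1
    exact (mul_eq_zero.1 h1.symm).resolve_left this
  refine ⟨lam, ?_⟩
  ext x
  simp only [Finset.mem_coe, Set.mem_setOf_eq]
  constructor
  · intro hx
    rw [hAS] at hx
    obtain ⟨b, -, hb⟩ := Finset.mem_image.1 hx
    refine ⟨fun i => if b i then 1 else -1, fun i => by by_cases h : b i <;> simp [h], ?_⟩
    rw [← hb, hf]
    simp [hlam0]
  · rintro ⟨eps, heps, hx⟩
    rw [hAS]
    refine Finset.mem_image.2 ⟨fun i => if eps i = 1 then true else false,
      Finset.mem_univ _, ?_⟩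
    rw [hf]
    simp only [hlam0, zero_add]
    rw [hx]
    apply Finset.sum_congr rfl
    intro i _
    rcases heps i with h | h <;> simp [h] <;> norm_num
end

section
/- Privacy tradeoff: suppose a query-answer protocol over a finite alphabet A ⊂ ℝ has the property that for every value q of the query Q there are deterministic vectors v_1, ..., v_ℓ ∈ ℝ^n and a polynomial f_q in ℓ variables such that for the weight vector W = w (uniform on A^n conditioned on Q = q) and every x ∈ ℝ^n, f_q(⟨v_1, x⟩, ..., ⟨v_ℓ, x⟩) = ⟨w, x⟩. Then I(W; Q) + ℓ·log₂|A| ≥ n·log₂|A|. -/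
open Finset

/-- Base-2 Shannon entropy of a pmf `p` on a finite type. -/
noncomputable def shannonEntropy {α : Type*} [Fintype α] (p : α → ℝ) : ℝ :=
  -∑ a, p a * Real.logb 2 (p a)

/-- Base-2 conditional entropy `H(W | Q)` where `W` has pmf `p` and `Q` is a
deterministic function of `W`. -/
noncomputable def condEntropy {α β : Type*} [Fintype α] [DecidableEq β]
    (p : α → ℝ) (Q : α → β) : ℝ :=
  -∑ a, p a * Real.logb 2 (p a / ∑ a' ∈ univ.filter (fun a' => Q a' = Q a), p a')

/-- Mutual information `I(W; Q) = H(W) − H(W | Q)` for a deterministic `Q`. -/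
noncomputable def mutualInfo {α β : Type*} [Fintype α] [DecidableEq β]
    (p : α → ℝ) (Q : α → β) : ℝ :=
  shannonEntropy p - condEntropy p Q

lemma exists_good_coords {n : ℕ} (S : Submodule ℝ (Fin n → ℝ)) :
    ∃ J : Finset (Fin n), J.card ≤ Module.finrank ℝ S ∧
      ∀ s ∈ S, (∀ j ∈ J, s j = 0) → s = 0 := by
  classical
  set φ : Fin n → Module.Dual ℝ S := fun j => (LinearMap.proj j).comp S.subtype with hφdef
  obtain ⟨t, hts, hspan, hli⟩ := exists_linearIndependent ℝ (Set.range φ)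
  have hfin : t.Finite := hli.setFinite
  haveI : Fintype t := hfin.fintype
  -- index choice
  have hidx : ∀ g : t, ∃ j : Fin n, φ j = (g : Module.Dual ℝ S) := fun g => hts g.2
  choose idx hidxspec using hidx
  refine ⟨Finset.univ.image idx, ?_, ?_⟩
  · calc (Finset.univ.image idx).card ≤ (Finset.univ : Finset t).card :=
          Finset.card_image_le
      _ = t.toFinset.card := by simp [Set.toFinset_card]
      _ = Module.finrank ℝ (Submodule.span ℝ t) := (finrank_span_set_eq_card hli).symm
      _ ≤ Module.finrank ℝ (Module.Dual ℝ S) := Submodule.finrank_le _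
      _ = Module.finrank ℝ S := Subspace.dual_finrank_eq
  · intro s hs hJ
    set sS : S := ⟨s, hs⟩ with hsS
    have ht0 : t ⊆ ↑(LinearMap.ker (Module.Dual.eval ℝ S sS)) := by
      intro g hg
      have hmem : idx ⟨g, hg⟩ ∈ Finset.univ.image idx :=
        Finset.mem_image_of_mem _ (Finset.mem_univ _)
      have : φ (idx ⟨g, hg⟩) sS = 0 := hJ _ hmem
      rw [hidxspec ⟨g, hg⟩] at this
      simpa [Module.Dual.eval_apply] using this
    have hker : Submodule.span ℝ t ≤ LinearMap.ker (Module.Dual.eval ℝ S sS) :=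
      Submodule.span_le.mpr ht0
    funext j
    have hmem : φ j ∈ Submodule.span ℝ t := by
      rw [hspan]; exact Submodule.subset_span (Set.mem_range_self j)
    have := hker hmem
    simpa [Module.Dual.eval_apply, hφdef] using this

lemma fiber_card {n ℓ : ℕ} {A : Finset ℝ} (hA : A.Nonempty) (v : Fin ℓ → Fin n → ℝ)
    (T : Finset (Fin n → {x : ℝ // x ∈ A}))
    (hT : ∀ w ∈ T, (fun j => ((w j : ℝ))) ∈ Submodule.span ℝ (Set.range v)) :
    T.card ≤ A.card ^ ℓ := by
  classical
  obtain ⟨J, hJcard, hJ⟩ := exists_good_coords (Submodule.span ℝ (Set.range v))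
  have hJℓ : J.card ≤ ℓ := hJcard.trans (by simpa [Set.finrank] using finrank_range_le_card v)
  have hinj : Set.InjOn (fun (w : Fin n → {x : ℝ // x ∈ A}) (j : J) => w j) ↑T := by
    intro w hw w' hw' h
    have hs : (fun j => ((w j : ℝ))) - (fun j => ((w' j : ℝ)))
        ∈ Submodule.span ℝ (Set.range v) := sub_mem (hT w hw) (hT w' hw')
    have hz : ∀ j ∈ J, ((fun j => ((w j : ℝ))) - fun j => ((w' j : ℝ))) j = 0 := by
      intro j hj
      have := congrFun h (⟨j, hj⟩ : J)
      simp only [Pi.sub_apply]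
      rw [show (w j : ℝ) = (w' j : ℝ) from congrArg Subtype.val this]
      ring
    have := hJ _ hs hz
    funext j
    have := congrFun this j
    simp only [Pi.sub_apply, Pi.zero_apply, sub_eq_zero] at this
    exact Subtype.ext this
  calc T.card ≤ (Finset.univ : Finset (J → {x : ℝ // x ∈ A})).card :=
        Finset.card_le_card_of_injOn _ (fun _ _ => Finset.mem_univ _) hinj
    _ = A.card ^ J.card := by
        simp [Fintype.card_fun, Fintype.card_coe]
    _ ≤ A.card ^ ℓ := Nat.pow_le_pow_right hA.card_pos hJℓ

lemma mem_span_of_decodable {n ℓ : ℕ} {A : Finset ℝ} {β : Type*}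
    (Q : (Fin n → {x : ℝ // x ∈ A}) → β)
    (v : β → Fin ℓ → (Fin n → ℝ)) (f : β → MvPolynomial (Fin ℓ) ℝ)
    (hdec : ∀ w : Fin n → {x : ℝ // x ∈ A}, ∀ x : Fin n → ℝ,
      MvPolynomial.eval (fun i => ∑ j, v (Q w) i j * x j) (f (Q w))
        = ∑ j, (w j : ℝ) * x j)
    (w : Fin n → {x : ℝ // x ∈ A}) :
    (fun j => ((w j : ℝ))) ∈ Submodule.span ℝ (Set.range (v (Q w))) := by
  rw [← Subspace.forall_mem_dualAnnihilator_apply_eq_zero_iff]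
  intro φ hφ
  set x : Fin n → ℝ := fun j => φ (fun k => if j = k then (1:ℝ) else 0) with hx
  have hzero : MvPolynomial.eval (fun _ : Fin ℓ => (0:ℝ)) (f (Q w)) = 0 := by
    have := hdec w 0
    simpa using this
  have hvx : ∀ i, ∑ j, v (Q w) i j * x j = 0 := by
    intro i
    have hv : φ (v (Q w) i) = ∑ j, v (Q w) i j * x j := by
      rw [LinearMap.pi_apply_eq_sum_univ φ (v (Q w) i)]
      simp [hx, smul_eq_mul]
    have h0 : φ (v (Q w) i) = 0 :=
      (Submodule.mem_dualAnnihilator φ).mp hφ _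
        (Submodule.subset_span (Set.mem_range_self i))
    rw [← hv, h0]
  have key := hdec w x
  have heq : (fun i => ∑ j, v (Q w) i j * x j) = (fun _ : Fin ℓ => (0:ℝ)) := funext hvx
  rw [heq, hzero] at key
  have hφw : φ (fun j => ((w j : ℝ))) = ∑ j, (w j : ℝ) * x j := by
    rw [LinearMap.pi_apply_eq_sum_univ]
    simp [hx, smul_eq_mul]
  rw [hφw, ← key]

/-- Privacy tradeoff: if `W` is uniform on `A^n`, `Q` is a deterministic function of `W`,
and for each query value `q` there are vectors `v_1(q), ..., v_ℓ(q) ∈ ℝ^n` and a polynomial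
`f_q` in `ℓ` variables such that `f_q(⟨v_1,x⟩, ..., ⟨v_ℓ,x⟩) = ⟨w,x⟩` for every `w` with
`Q(w) = q` and every `x ∈ ℝ^n`, then `I(W; Q) + ℓ·log₂|A| ≥ n·log₂|A|`. -/
theorem privacy_tradeoff
    (n ℓ : ℕ) (A : Finset ℝ) (hA : A.Nonempty)
    {β : Type*} [Fintype β] [DecidableEq β]
    (Q : (Fin n → {x : ℝ // x ∈ A}) → β)
    (v : β → Fin ℓ → (Fin n → ℝ))
    (f : β → MvPolynomial (Fin ℓ) ℝ)
    (hdec : ∀ w : Fin n → {x : ℝ // x ∈ A}, ∀ x : Fin n → ℝ,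
      MvPolynomial.eval (fun i => ∑ j, v (Q w) i j * x j) (f (Q w))
        = ∑ j, (w j : ℝ) * x j) :
    mutualInfo (fun _ : Fin n → {x : ℝ // x ∈ A} =>
        ((Fintype.card (Fin n → {x : ℝ // x ∈ A}) : ℝ))⁻¹) Q
      + ℓ * Real.logb 2 A.card ≥ n * Real.logb 2 A.card := by
  classical
  haveI : Nonempty {x : ℝ // x ∈ A} := hA.to_subtype
  set L : ℝ := Real.logb 2 (A.card : ℝ) with hL
  set N : ℕ := Fintype.card (Fin n → {x : ℝ // x ∈ A}) with hNdef
  have hN : N = A.card ^ n := by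
    rw [hNdef]
    simp [Fintype.card_fun]
  have hN1 : 1 ≤ N := Fintype.card_pos
  have hNR : (0:ℝ) < (N:ℝ) := by exact_mod_cast hN1
  have hlogN : Real.logb 2 (N:ℝ) = n * L := by
    rw [hN, hL]
    push_cast
    rw [Real.logb_pow]
  -- Shannon entropy of the uniform distribution
  have hsh : shannonEntropy (fun _ : Fin n → {x : ℝ // x ∈ A} => ((N:ℝ))⁻¹)
      = n * L := by
    unfold shannonEntropy
    rw [Finset.sum_const, Finset.card_univ, ← hNdef, nsmul_eq_mul, Real.logb_inv,
      ← hlogN]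
    field_simp
  -- fiber cardinalities
  set c : (Fin n → {x : ℝ // x ∈ A}) → ℕ :=
    fun a => (univ.filter (fun a' => Q a' = Q a)).card with hc
  have hc1 : ∀ a, 1 ≤ c a := by
    intro a
    exact Finset.card_pos.mpr ⟨a, Finset.mem_filter.mpr ⟨Finset.mem_univ _, rfl⟩⟩
  have hcle : ∀ a, c a ≤ A.card ^ ℓ := by
    intro a
    refine fiber_card hA (v (Q a)) _ ?_
    intro w hw
    have hQ : Q w = Q a := (Finset.mem_filter.mp hw).2
    have := mem_span_of_decodable Q v f hdec w
    rwa [hQ] at this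
  -- conditional entropy
  have hcond : condEntropy (fun _ : Fin n → {x : ℝ // x ∈ A} => ((N:ℝ))⁻¹) Q
      = ∑ a, (N:ℝ)⁻¹ * Real.logb 2 (c a) := by
    unfold condEntropy
    rw [← Finset.sum_neg_distrib]
    refine Finset.sum_congr rfl (fun a _ => ?_)
    have hsum : ∑ a' ∈ univ.filter (fun a' => Q a' = Q a), (N:ℝ)⁻¹
        = (c a) * (N:ℝ)⁻¹ := by
      rw [Finset.sum_const, nsmul_eq_mul, hc]
    rw [hsum]
    have hca : (0:ℝ) < (c a : ℝ) := by exact_mod_cast hc1 a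
    have : (N:ℝ)⁻¹ / ((c a) * (N:ℝ)⁻¹) = ((c a : ℝ))⁻¹ := by
      field_simp
    rw [this, Real.logb_inv]
    ring
  have hcondle : condEntropy (fun _ : Fin n → {x : ℝ // x ∈ A} => ((N:ℝ))⁻¹) Q
      ≤ ℓ * L := by
    rw [hcond]
    have hterm : ∀ a ∈ (univ : Finset (Fin n → {x : ℝ // x ∈ A})),
        (N:ℝ)⁻¹ * Real.logb 2 (c a) ≤ (N:ℝ)⁻¹ * (ℓ * L) := by
      intro a _
      refine mul_le_mul_of_nonneg_left ?_ (by positivity)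
      have hca : (0:ℝ) < (c a : ℝ) := by exact_mod_cast hc1 a
      have hle : (c a : ℝ) ≤ ((A.card ^ ℓ : ℕ) : ℝ) := by exact_mod_cast hcle a
      calc Real.logb 2 (c a) ≤ Real.logb 2 ((A.card ^ ℓ : ℕ) : ℝ) :=
            Real.logb_le_logb_of_le one_lt_two hca hle
        _ = ℓ * L := by rw [hL]; push_cast; rw [Real.logb_pow]
    calc (∑ a, (N:ℝ)⁻¹ * Real.logb 2 (c a))
        ≤ ∑ _a : Fin n → {x : ℝ // x ∈ A}, (N:ℝ)⁻¹ * (ℓ * L) :=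
          Finset.sum_le_sum hterm
      _ = ℓ * L := by
          rw [Finset.sum_const, Finset.card_univ, ← hNdef, nsmul_eq_mul]
          field_simp
  unfold mutualInfo
  rw [hsh]
  linarith
end
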